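/- Let k₁, k₂, k₃ > 0 and define V(ρ,δ,γ) = ρ² + δ² + (k₁/k₃)(γ + (1/2) arctan(2k₂δ))² on ℝ³. Then for all (ρ,δ,γ) ∈ ℝ³: min{1/2, k₁/(2k₁k₂² + k₃)} · (ρ² + δ² + γ²) ≤ V(ρ,δ,γ) ≤ max{1, 1 + 2k₁k₂²/k₃, 2k₁/k₃} · (ρ² + δ² + γ²). (This is the quadratic sandwich bound on the bidirectional backstepping Lyapunov function used to convert Lyapunov-function decay estimates into bounds on the Euclidean norm of the state.) -/

import Mathlib

/-!
Write `a = ½ arctan (2 k₂ δ)` and `c = k₁ / k₃`. Since `|arctan x| ≤ |x|`, we have `a² ≤ k₂² δ²`,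
and this is the only property of the arctan term that is needed. The upper bound then follows from
`(γ + a)² ≤ 2γ² + 2a²`. For the lower bound, the weighted inequality
`m (c - m) γ² ≤ c ((c - m)(γ + a)² + m a²)` trades `γ²` for `(γ + a)²` and `δ²`; it gives
`m (ρ² + δ² + γ²) ≤ V` whenever `m c k₂² ≤ (c - m)(1 - m)`, which holds for `m = 1/2` when
`2k₁k₂² + k₃ ≤ 2k₁` and for `m = k₁ / (2k₁k₂² + k₃)` otherwise.
-/

open Real

lemma Real.arctan_le_self_of_nonneg {x : ℝ} (hx : 0 ≤ x) : arctan x ≤ x := by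
  simpa only [tan_arctan] using le_tan (arctan_nonneg.2 hx) (arctan_lt_pi_div_two x)

lemma Real.abs_arctan_le_abs (x : ℝ) : |arctan x| ≤ |x| := by
  rcases le_total 0 x with hx | hx
  · rw [abs_of_nonneg (arctan_nonneg.2 hx), abs_of_nonneg hx]
    exact arctan_le_self_of_nonneg hx
  · rw [abs_of_nonpos (arctan_le_zero.2 hx), abs_of_nonpos hx, ← arctan_neg]
    exact arctan_le_self_of_nonneg (neg_nonneg.2 hx)

lemma sq_half_arctan_two_mul_le (k δ : ℝ) :
    ((1 / 2) * arctan (2 * k * δ)) ^ 2 ≤ k ^ 2 * δ ^ 2 := by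
  have h := sq_le_sq.2 (abs_arctan_le_abs (2 * k * δ))
  nlinarith

lemma mul_mul_add_sq_le {α : Type*} [CommRing α] [LinearOrder α] [IsStrictOrderedRing α]
    (u v x y : α) : u * v * (x + y) ^ 2 ≤ (u + v) * (v * x ^ 2 + u * y ^ 2) := by
  nlinarith [sq_nonneg (v * x - u * y)]

lemma mul_sum_sq_le_of_sq_le {ρ δ γ a k c m : ℝ} (ha : a ^ 2 ≤ k ^ 2 * δ ^ 2)
    (hm : 0 < m) (hmc : m < c) (hweight : m * c * k ^ 2 ≤ (c - m) * (1 - m)) :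
    m * (ρ ^ 2 + δ ^ 2 + γ ^ 2) ≤ ρ ^ 2 + δ ^ 2 + c * (γ + a) ^ 2 := by
  have hcm : 0 < c - m := sub_pos.2 hmc
  have hc : 0 < c := hm.trans hmc
  have hm₁ : m ≤ 1 := by nlinarith [mul_nonneg (mul_nonneg hm.le hc.le) (sq_nonneg k)]
  have hγ : m * (c - m) * γ ^ 2 ≤ c * ((c - m) * (γ + a) ^ 2 + m * a ^ 2) := by
    simpa only [add_neg_cancel_right, neg_sq, add_sub_cancel] using
      mul_mul_add_sq_le m (c - m) (γ + a) (-a)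
  nlinarith [mul_le_mul_of_nonneg_left ha (mul_nonneg hm.le hc.le),
    mul_le_mul_of_nonneg_right hweight (sq_nonneg δ),
    mul_nonneg (mul_nonneg hcm.le (sub_nonneg.2 hm₁)) (sq_nonneg ρ)]

lemma sum_sq_le_mul_sum_sq_of_sq_le {ρ δ γ a k c M : ℝ} (ha : a ^ 2 ≤ k ^ 2 * δ ^ 2)
    (hc : 0 ≤ c) (hρ : 1 ≤ M) (hδ : 1 + 2 * c * k ^ 2 ≤ M) (hγ : 2 * c ≤ M) :
    ρ ^ 2 + δ ^ 2 + c * (γ + a) ^ 2 ≤ M * (ρ ^ 2 + δ ^ 2 + γ ^ 2) := by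
  have h : (γ + a) ^ 2 ≤ 2 * γ ^ 2 + 2 * k ^ 2 * δ ^ 2 := by
    nlinarith [add_sq_le (a := γ) (b := a)]
  nlinarith [mul_le_mul_of_nonneg_left h hc, mul_le_mul_of_nonneg_right hρ (sq_nonneg ρ),
    mul_le_mul_of_nonneg_right hδ (sq_nonneg δ), mul_le_mul_of_nonneg_right hγ (sq_nonneg γ)]

theorem bidirectional_Lyapunov_quadratic_sandwich
    (k₁ k₂ k₃ : ℝ) (hk₁ : 0 < k₁) (hk₂ : 0 < k₂) (hk₃ : 0 < k₃) :
    ∀ ρ δ γ : ℝ,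
      min (1 / 2) (k₁ / (2 * k₁ * k₂ ^ 2 + k₃)) * (ρ ^ 2 + δ ^ 2 + γ ^ 2)
        ≤ ρ ^ 2 + δ ^ 2
            + (k₁ / k₃) * (γ + (1 / 2) * Real.arctan (2 * k₂ * δ)) ^ 2
      ∧ ρ ^ 2 + δ ^ 2
            + (k₁ / k₃) * (γ + (1 / 2) * Real.arctan (2 * k₂ * δ)) ^ 2
        ≤ max 1 (max (1 + 2 * k₁ * k₂ ^ 2 / k₃) (2 * k₁ / k₃))
            * (ρ ^ 2 + δ ^ 2 + γ ^ 2) := by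
  intro ρ δ γ
  have ha := sq_half_arctan_two_mul_le k₂ δ
  have hs : 0 ≤ ρ ^ 2 + δ ^ 2 + γ ^ 2 := by positivity
  have hD : 0 < 2 * k₁ * k₂ ^ 2 + k₃ := by positivity
  constructor
  · rcases le_total (2 * k₁ * k₂ ^ 2 + k₃) (2 * k₁) with hle | hle
    · refine (mul_le_mul_of_nonneg_right (min_le_left _ _) hs).trans
        (mul_sum_sq_le_of_sq_le ha one_half_pos ?_ ?_)
      · rw [lt_div_iff₀ hk₃]; nlinarith [pow_pos hk₂ 2]
      · field_simp; nlinarith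
    · refine (mul_le_mul_of_nonneg_right (min_le_right _ _) hs).trans
        (mul_sum_sq_le_of_sq_le ha (div_pos hk₁ hD) ?_ ?_)
      · rw [div_lt_div_iff_of_pos_left hk₁ hD hk₃]; nlinarith [pow_pos hk₂ 2]
      · field_simp
        nlinarith [mul_le_mul_of_nonneg_left hle (by positivity : 0 ≤ k₁ * k₂ ^ 2)]
  · exact sum_sq_le_mul_sum_sq_of_sq_le ha (div_pos hk₁ hk₃).le (le_max_left _ _)
      (le_of_eq_of_le (by ring) ((le_max_left _ _).trans (le_max_right _ _)))
      (le_of_eq_of_le (by ring) ((le_max_right _ _).trans (le_max_right _ _)))
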